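/- arXiv:1206.4483 — 2 statements merged into one kernel-verified Lean document; each statement's English description precedes it below -/
import Mathlib

section
/- Let r ∈ (0,1), s = sqrt(1 - r^2), and for natural numbers (k,l) ≠ (0,0) define E(k,l;r) to have the same sign as k^2 s^2 + l^2 r^2 - 1. Then E(k,l;r) ≥ 0 for all (k,l) ≠ (0,0) if and only if r ∈ [1/2, sqrt(3)/2]. -/
/-!
The numerator factor `(k⁴ - k²) s⁴ + (l⁴ - l²) r⁴ + 2 k² l² r² s²` vanishes on the modes
`(1,0)`, `(0,1)` and is positive on all others, so for `k + l ≥ 2` the sign of the eigenvalue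
is that of `k² s² + l² r² - 1`. Using `r² + s² = 1` this is `0` at `(1,1)`, and for `k ≥ 2`
or `l ≥ 2` it is nonnegative as soon as `4 s² ≥ 1` and `4 r² ≥ 1`; the modes `(2,0)` and
`(0,2)` show these two conditions are necessary. They say exactly `r ∈ [1/2, √3/2]`.
-/

/-- Eigenvalue of the stability operator `L_r` at the Clifford torus on the
Fourier mode `A_{k,l}`. -/
noncomputable def cliffordEigenvalue (r s : ℝ) (k l : ℕ) : ℝ :=
  (((k : ℝ) ^ 4 - (k : ℝ) ^ 2) * s ^ 4 + ((l : ℝ) ^ 4 - (l : ℝ) ^ 2) * r ^ 4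
      + 2 * (k : ℝ) ^ 2 * (l : ℝ) ^ 2 * r ^ 2 * s ^ 2)
    * ((k : ℝ) ^ 2 * s ^ 2 + (l : ℝ) ^ 2 * r ^ 2 - 1)
    / (r ^ 4 * s ^ 4 * ((k : ℝ) ^ 2 * s ^ 2 + (l : ℝ) ^ 2 * r ^ 2))

section

variable {r s : ℝ} {k l : ℕ}

lemma natCast_sq_le_pow_four (n : ℕ) : (n : ℝ) ^ 2 ≤ (n : ℝ) ^ 4 := by
  rcases n.eq_zero_or_pos with rfl | hn
  · simp
  · exact_mod_cast Nat.pow_le_pow_right hn (by norm_num)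

lemma natCast_sq_lt_pow_four {n : ℕ} (hn : 2 ≤ n) : (n : ℝ) ^ 2 < (n : ℝ) ^ 4 := by
  exact_mod_cast Nat.pow_lt_pow_right (by omega) (by norm_num)

/-- For `(k, l) = (0, 0)` the value `0` is the junk value of division by zero. -/
lemma cliffordEigenvalue_eq_zero_of_add_le_one (h : k + l ≤ 1) :
    cliffordEigenvalue r s k l = 0 := by
  obtain ⟨rfl, rfl⟩ | ⟨rfl, rfl⟩ | ⟨rfl, rfl⟩ :
      (k = 0 ∧ l = 0) ∨ (k = 1 ∧ l = 0) ∨ (k = 0 ∧ l = 1) := by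
    omega
  all_goals simp [cliffordEigenvalue]

lemma cliffordEigenvalue_numerator_pos (hr : r ≠ 0) (hs : s ≠ 0) (hkl : 2 ≤ k + l) :
    0 < ((k : ℝ) ^ 4 - (k : ℝ) ^ 2) * s ^ 4 + ((l : ℝ) ^ 4 - (l : ℝ) ^ 2) * r ^ 4
      + 2 * (k : ℝ) ^ 2 * (l : ℝ) ^ 2 * r ^ 2 * s ^ 2 := by
  have hk := natCast_sq_le_pow_four k
  have hl := natCast_sq_le_pow_four l
  have hr4 : 0 < r ^ 4 := by positivity
  have hs4 : 0 < s ^ 4 := by positivity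
  have hkl0 : 0 ≤ 2 * (k : ℝ) ^ 2 * (l : ℝ) ^ 2 * r ^ 2 * s ^ 2 := by positivity
  rcases le_or_gt 2 k with hk2 | hk2
  · nlinarith [natCast_sq_lt_pow_four hk2]
  rcases le_or_gt 2 l with hl2 | hl2
  · nlinarith [natCast_sq_lt_pow_four hl2]
  obtain ⟨rfl, rfl⟩ : k = 1 ∧ l = 1 := by omega
  norm_num
  positivity

lemma cliffordEigenvalue_nonneg_iff (hr : r ≠ 0) (hs : s ≠ 0) (hkl : 2 ≤ k + l) :
    0 ≤ cliffordEigenvalue r s k l ↔ 1 ≤ (k : ℝ) ^ 2 * s ^ 2 + (l : ℝ) ^ 2 * r ^ 2 := by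
  have hmode : 0 < (k : ℝ) ^ 2 * s ^ 2 + (l : ℝ) ^ 2 * r ^ 2 := by
    rcases Nat.eq_zero_or_pos k with rfl | hk
    · have : (0 : ℝ) < l := by exact_mod_cast (by omega : 0 < l)
      simp only [CharP.cast_eq_zero]; positivity
    · have : (0 : ℝ) < k := by exact_mod_cast hk
      positivity
  rw [cliffordEigenvalue, le_div_iff₀ (by positivity), zero_mul,
    mul_nonneg_iff_of_pos_left (cliffordEigenvalue_numerator_pos hr hs hkl), sub_nonneg]

lemma one_le_mode_of_two_le_add (hrs : r ^ 2 + s ^ 2 = 1) (hr : 1 ≤ 4 * r ^ 2)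
    (hs : 1 ≤ 4 * s ^ 2) (hkl : 2 ≤ k + l) :
    1 ≤ (k : ℝ) ^ 2 * s ^ 2 + (l : ℝ) ^ 2 * r ^ 2 := by
  have hks := mul_nonneg (sq_nonneg (k : ℝ)) (sq_nonneg s)
  have hlr := mul_nonneg (sq_nonneg (l : ℝ)) (sq_nonneg r)
  rcases le_or_gt 2 k with hk2 | hk2
  · have : (2 : ℝ) ≤ k := by exact_mod_cast hk2
    nlinarith
  rcases le_or_gt 2 l with hl2 | hl2
  · have : (2 : ℝ) ≤ l := by exact_mod_cast hl2
    nlinarith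
  obtain ⟨rfl, rfl⟩ : k = 1 ∧ l = 1 := by omega
  norm_num
  linarith

theorem forall_cliffordEigenvalue_nonneg_iff (hr : r ≠ 0) (hs : s ≠ 0)
    (hrs : r ^ 2 + s ^ 2 = 1) :
    (∀ k l : ℕ, ¬(k = 0 ∧ l = 0) → 0 ≤ cliffordEigenvalue r s k l) ↔
      1 ≤ 4 * r ^ 2 ∧ 1 ≤ 4 * s ^ 2 := by
  constructor
  · intro h
    have h20 := (cliffordEigenvalue_nonneg_iff hr hs le_rfl).1 (h 2 0 (by simp))
    have h02 := (cliffordEigenvalue_nonneg_iff hr hs le_rfl).1 (h 0 2 (by simp))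
    norm_num at h20 h02
    constructor <;> linarith
  · rintro ⟨hr4, hs4⟩ k l -
    rcases le_or_gt 2 (k + l) with hkl | hkl
    · exact (cliffordEigenvalue_nonneg_iff hr hs hkl).2
        (one_le_mode_of_two_le_add hrs hr4 hs4 hkl)
    · exact (cliffordEigenvalue_eq_zero_of_add_le_one (by omega)).ge

lemma mem_Icc_half_sqrt_three_half_iff (hr : 0 < r) :
    r ∈ Set.Icc (1 / 2 : ℝ) (Real.sqrt 3 / 2) ↔ 1 ≤ 4 * r ^ 2 ∧ 4 * r ^ 2 ≤ 3 := by
  rw [Set.mem_Icc, le_div_iff₀ two_pos, Real.le_sqrt (by positivity) (by norm_num)]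
  constructor
  · rintro ⟨h1, h2⟩
    constructor <;> nlinarith
  · rintro ⟨h1, h2⟩
    constructor <;> nlinarith

end

theorem stmt_7 (r : ℝ) (hr : r ∈ Set.Ioo (0 : ℝ) 1) (s : ℝ)
    (hs : s = Real.sqrt (1 - r ^ 2)) :
    (∀ k l : ℕ, ¬(k = 0 ∧ l = 0) → 0 ≤ cliffordEigenvalue r s k l) ↔
      r ∈ Set.Icc (1 / 2 : ℝ) (Real.sqrt 3 / 2) := by
  obtain ⟨hr0, hr1⟩ := hr
  have hs2 : s ^ 2 = 1 - r ^ 2 := by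
    rw [hs, Real.sq_sqrt (by nlinarith)]
  have hs0 : s ≠ 0 := by
    rw [hs]; exact (Real.sqrt_pos.2 (by nlinarith)).ne'
  rw [forall_cliffordEigenvalue_nonneg_iff hr0.ne' hs0 (by linarith),
    mem_Icc_half_sqrt_three_half_iff hr0, hs2]
  constructor <;> rintro ⟨h1, h2⟩ <;> constructor <;> linarith
end

section
/- Let r, s > 0 with r^2 + s^2 = 1 and let k, l be natural numbers, not both zero. Plugging the Fourier mode eigenvalues into the stability operator: ((k^2 s^2 + l^2 r^2)^2/(r^4 s^4) - (k^2 s^2 + l^2 r^2)/(r^4 s^4) - k^2/r^4 - l^2/s^4 + 1/(2 r^4 s^4) - (r^2-s^2)(k^2 s^2 - l^2 r^2)/(2 r^4 s^4 (k^2 s^2 + l^2 r^2))) equals ((k^4 - k^2) s^4 + (l^4 - l^2) r^4 + 2 k^2 l^2 r^2 s^2)(k^2 s^2 + l^2 r^2 - 1)/(r^4 s^4 (k^2 s^2 + l^2 r^2)). -/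
/-!
Write `Q = k²s² + l²r²`. The first factor of the numerator on the right is `Q² − k²s⁴ − l²r⁴`,
so after clearing the denominator `2r⁴s⁴Q` the identity reduces to
`Q − (r² − s²)(k²s² − l²r²) = 2(k²s⁴ + l²r⁴)`, which holds on the circle `r² + s² = 1`
because there `Q = Q(r² + s²)`.
-/

theorem mul_sq_add_mul_sq_sub_eq_of_sq_add_sq_eq_one {R : Type*} [CommRing R] {r s : R}
    (h : r ^ 2 + s ^ 2 = 1) (a b : R) :
    a * s ^ 2 + b * r ^ 2 - (r ^ 2 - s ^ 2) * (a * s ^ 2 - b * r ^ 2)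
      = 2 * (a * s ^ 4 + b * r ^ 4) := by
  linear_combination (-(a * s ^ 2 + b * r ^ 2)) * h

theorem sq_mul_sq_add_sq_mul_sq_pos {K : Type*} [Field K] [LinearOrder K] [IsStrictOrderedRing K]
    {a b x y : K} (hx : x ≠ 0) (hy : y ≠ 0) (hab : ¬(a = 0 ∧ b = 0)) :
    0 < a ^ 2 * x ^ 2 + b ^ 2 * y ^ 2 := by
  rcases eq_or_ne a 0 with rfl | ha
  · have hb : b ≠ 0 := fun hb => hab ⟨rfl, hb⟩
    rw [zero_pow two_ne_zero, zero_mul, zero_add]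
    positivity
  · exact add_pos_of_pos_of_nonneg (by positivity) (by positivity)

theorem clifford_mode_eigenvalue_eq {K : Type*} [Field K] {r s : K} (hr : r ≠ 0) (hs : s ≠ 0)
    (h2 : (2 : K) ≠ 0) (h : r ^ 2 + s ^ 2 = 1) {k l : K}
    (hQ : k ^ 2 * s ^ 2 + l ^ 2 * r ^ 2 ≠ 0) :
    (k ^ 2 * s ^ 2 + l ^ 2 * r ^ 2) ^ 2 / (r ^ 4 * s ^ 4)
      - (k ^ 2 * s ^ 2 + l ^ 2 * r ^ 2) / (r ^ 4 * s ^ 4)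
      - k ^ 2 / r ^ 4 - l ^ 2 / s ^ 4 + 1 / (2 * r ^ 4 * s ^ 4)
      - (r ^ 2 - s ^ 2) * (k ^ 2 * s ^ 2 - l ^ 2 * r ^ 2) /
          (2 * r ^ 4 * s ^ 4 * (k ^ 2 * s ^ 2 + l ^ 2 * r ^ 2))
    = ((k ^ 4 - k ^ 2) * s ^ 4 + (l ^ 4 - l ^ 2) * r ^ 4 + 2 * k ^ 2 * l ^ 2 * r ^ 2 * s ^ 2)
        * (k ^ 2 * s ^ 2 + l ^ 2 * r ^ 2 - 1)
        / (r ^ 4 * s ^ 4 * (k ^ 2 * s ^ 2 + l ^ 2 * r ^ 2)) := by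
  field_simp
  linear_combination mul_sq_add_mul_sq_sub_eq_of_sq_add_sq_eq_one h (k ^ 2) (l ^ 2)

theorem stmt_19 (r s : ℝ) (hr : 0 < r) (hs : 0 < s) (h : r ^ 2 + s ^ 2 = 1)
    (k l : ℕ) (hkl : ¬(k = 0 ∧ l = 0)) :
    ((k : ℝ) ^ 2 * s ^ 2 + (l : ℝ) ^ 2 * r ^ 2) ^ 2 / (r ^ 4 * s ^ 4)
      - ((k : ℝ) ^ 2 * s ^ 2 + (l : ℝ) ^ 2 * r ^ 2) / (r ^ 4 * s ^ 4)
      - (k : ℝ) ^ 2 / r ^ 4 - (l : ℝ) ^ 2 / s ^ 4 + 1 / (2 * r ^ 4 * s ^ 4)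
      - (r ^ 2 - s ^ 2) * ((k : ℝ) ^ 2 * s ^ 2 - (l : ℝ) ^ 2 * r ^ 2) /
          (2 * r ^ 4 * s ^ 4 * ((k : ℝ) ^ 2 * s ^ 2 + (l : ℝ) ^ 2 * r ^ 2))
    = (((k : ℝ) ^ 4 - (k : ℝ) ^ 2) * s ^ 4 + ((l : ℝ) ^ 4 - (l : ℝ) ^ 2) * r ^ 4
          + 2 * (k : ℝ) ^ 2 * (l : ℝ) ^ 2 * r ^ 2 * s ^ 2)
        * ((k : ℝ) ^ 2 * s ^ 2 + (l : ℝ) ^ 2 * r ^ 2 - 1)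
        / (r ^ 4 * s ^ 4 * ((k : ℝ) ^ 2 * s ^ 2 + (l : ℝ) ^ 2 * r ^ 2)) := by
  have hkl' : ¬((k : ℝ) = 0 ∧ (l : ℝ) = 0) := by simpa only [Nat.cast_eq_zero] using hkl
  have hQ := sq_mul_sq_add_sq_mul_sq_pos hs.ne' hr.ne' hkl'
  exact clifford_mode_eigenvalue_eq hr.ne' hs.ne' two_ne_zero h hQ.ne'
end
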